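/- arXiv:0706.0073 — 9 statements merged into one kernel-verified Lean document; each statement's English description precedes it below -/
import Mathlib

section
/- In the first-order polynomial DLM, for distinct sites i ≠ j: (i) for every time t ≥ 1 the same-time correlation is Cor(y_{it}, y_{jt}) = (σβ² + t·σδ² + σε²·exp(−d_{ij}/λ)) / (σβ² + t·σδ² + σε²), and (ii) for all distinct times s ≠ t the cross-time correlation is Cor(y_{it}, y_{js}) = (σβ² + min{t,s}·σδ²) / (√(σβ² + t·σδ² + σε²) · √(σβ² + s·σδ² + σε²)). -/
open MeasureTheory Filter

/-- Covariance of two real random variables: `Cov(X,Y) = E[XY] - E[X]E[Y]`. -/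
noncomputable def cov {Ω : Type*} [MeasurableSpace Ω] (μ : Measure Ω) (X Y : Ω → ℝ) : ℝ :=
  (∫ ω, X ω * Y ω ∂μ) - (∫ ω, X ω ∂μ) * (∫ ω, Y ω ∂μ)

/-- Correlation of two real random variables. -/
noncomputable def corr {Ω : Type*} [MeasurableSpace Ω] (μ : Measure Ω) (X Y : Ω → ℝ) : ℝ :=
  cov μ X Y / (Real.sqrt (cov μ X X) * Real.sqrt (cov μ Y Y))

/-!
Write `y_{it} = L_t + ε_{it}` with the level `L_t = β₀ + δ₁ + ⋯ + δ_t`. The level is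
uncorrelated with every noise term, so `Cov(y_{it}, y_{js}) = Cov(L_t, L_s) + Cov(ε_{it}, ε_{js})`.
The increments are pairwise uncorrelated with a common variance, so
`Cov(L_t, L_s) = σβ² + #({1,…,t} ∩ {1,…,s})·σδ² = σβ² + min(t,s)·σδ²`, while the noise covariance is
`σε² e^{-d_{ij}/λ}` at equal times and `0` otherwise. In (i) both variances equal
`σβ² + tσδ² + σε²`, which is nonnegative as a variance, so the two square roots cancel.
-/

open ProbabilityTheory Finset

section Covariance

variable {Ω : Type*} [MeasurableSpace Ω] {μ : Measure Ω}

lemma cov_eq_covariance [IsProbabilityMeasure μ] {X Y : Ω → ℝ} (hX : MemLp X 2 μ)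
    (hY : MemLp Y 2 μ) : cov μ X Y = cov[X, Y; μ] :=
  (covariance_eq_sub hX hY).symm

lemma corr_eq_covariance_div [IsProbabilityMeasure μ] {X Y : Ω → ℝ} (hX : MemLp X 2 μ)
    (hY : MemLp Y 2 μ) :
    corr μ X Y = cov[X, Y; μ] / (√cov[X, X; μ] * √cov[Y, Y; μ]) := by
  rw [corr, cov_eq_covariance hX hY, cov_eq_covariance hX hX, cov_eq_covariance hY hY]

lemma covariance_self_nonneg {X : Ω → ℝ} (hX : AEMeasurable X μ) : 0 ≤ cov[X, X; μ] :=
  covariance_self hX ▸ variance_nonneg X μ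

variable [IsFiniteMeasure μ]

lemma covariance_add_add_of_cross_eq_zero {A B A' B' : Ω → ℝ} (hA : MemLp A 2 μ)
    (hB : MemLp B 2 μ) (hA' : MemLp A' 2 μ) (hB' : MemLp B' 2 μ)
    (hAB' : cov[A, B'; μ] = 0) (hBA' : cov[B, A'; μ] = 0) :
    cov[A + B, A' + B'; μ] = cov[A, A'; μ] + cov[B, B'; μ] := by
  rw [covariance_add_left hA hB (hA'.add hB'), covariance_add_right hA hA' hB',
    covariance_add_right hB hA' hB', hAB', hBA']
  ring

lemma covariance_sum_sum_of_uncorrelated {ι : Type*} [DecidableEq ι] {δ : ι → Ω → ℝ}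
    {σ2 : ℝ} (hδ : ∀ k, MemLp (δ k) 2 μ) (hvar : ∀ k, cov[δ k, δ k; μ] = σ2)
    (huncorr : ∀ k l, k ≠ l → cov[δ k, δ l; μ] = 0) (A B : Finset ι) :
    cov[∑ k ∈ A, δ k, ∑ l ∈ B, δ l; μ] = #(A ∩ B) * σ2 := by
  have hrow : ∀ k, ∑ l ∈ B, cov[δ k, δ l; μ] = if k ∈ B then σ2 else 0 := fun k => by
    have hterm : ∀ l, cov[δ k, δ l; μ] = if k = l then σ2 else 0 := fun l => by
      split_ifs with hkl
      · exact hkl ▸ hvar k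
      · exact huncorr k l hkl
    simp only [hterm, sum_ite_eq]
  rw [covariance_sum_sum' (fun k _ => hδ k) (fun l _ => hδ l), sum_congr rfl fun k _ => hrow k,
    sum_ite_mem, sum_const, nsmul_eq_mul]

end Covariance

noncomputable def dlmLevel {Ω : Type*} (β0 : Ω → ℝ) (δ : ℕ → Ω → ℝ) (t : ℕ) : Ω → ℝ :=
  β0 + ∑ k ∈ Icc 1 t, δ k

section DLM

variable {Ω : Type*} [MeasurableSpace Ω] {μ : Measure Ω} {β0 : Ω → ℝ} {δ : ℕ → Ω → ℝ}

lemma memLp_dlmLevel (hβ : MemLp β0 2 μ) (hδ : ∀ k, MemLp (δ k) 2 μ) (t : ℕ) :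
    MemLp (dlmLevel β0 δ t) 2 μ :=
  hβ.add (memLp_finsetSum' _ fun k _ => hδ k)

variable [IsFiniteMeasure μ]

lemma covariance_dlmLevel {sb2 sd2 : ℝ} (hβ : MemLp β0 2 μ) (hδ : ∀ k, MemLp (δ k) 2 μ)
    (hβvar : cov[β0, β0; μ] = sb2) (hδvar : ∀ k, cov[δ k, δ k; μ] = sd2)
    (hδδ : ∀ k l, k ≠ l → cov[δ k, δ l; μ] = 0) (hβδ : ∀ k, cov[β0, δ k; μ] = 0) (t s : ℕ) :
    cov[dlmLevel β0 δ t, dlmLevel β0 δ s; μ] = sb2 + (min t s : ℕ) * sd2 := by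
  have hS : ∀ t, MemLp (∑ k ∈ Icc 1 t, δ k) 2 μ := fun t => memLp_finsetSum' _ fun k _ => hδ k
  have hβS : ∀ t, cov[β0, ∑ k ∈ Icc 1 t, δ k; μ] = 0 := fun t => by
    rw [covariance_sum_right' (fun k _ => hδ k) hβ]
    exact sum_eq_zero fun k _ => hβδ k
  have hIcc : Icc 1 t ∩ Icc 1 s = Icc 1 (min t s) := by
    ext; simp only [mem_inter, mem_Icc]; omega
  rw [dlmLevel, dlmLevel, covariance_add_add_of_cross_eq_zero hβ (hS t) hβ (hS s) (hβS s)
    (covariance_comm _ _ ▸ hβS t), hβvar, covariance_sum_sum_of_uncorrelated hδ hδvar hδδ,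
    hIcc, Nat.card_Icc, Nat.add_sub_cancel]

lemma covariance_dlmLevel_left_eq_zero {E : Ω → ℝ} (hβ : MemLp β0 2 μ)
    (hδ : ∀ k, MemLp (δ k) 2 μ) (hE : MemLp E 2 μ) (hβE : cov[β0, E; μ] = 0)
    (hδE : ∀ k, cov[δ k, E; μ] = 0) (t : ℕ) : cov[dlmLevel β0 δ t, E; μ] = 0 := by
  rw [dlmLevel, covariance_add_left hβ (memLp_finsetSum' _ fun k _ => hδ k) hE,
    covariance_sum_left' (fun k _ => hδ k) hE, hβE, sum_eq_zero fun k _ => hδE k, add_zero]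

end DLM

theorem correlation_formulas_general
    {Ω : Type*} [MeasurableSpace Ω] (μ : Measure Ω) [IsProbabilityMeasure μ]
    (n : ℕ) (sb2 sd2 se2 lam : ℝ)
    (β0 : Ω → ℝ) (δ : ℕ → Ω → ℝ) (ε : Fin (n + 1) → ℕ → Ω → ℝ)
    (d : Fin (n + 1) → Fin (n + 1) → ℝ)
    (hddiag : ∀ i, d i i = 0)
    (hβL2 : MemLp β0 2 μ) (hδL2 : ∀ k, MemLp (δ k) 2 μ)
    (hεL2 : ∀ i t, MemLp (ε i t) 2 μ)
    (hβvar : cov μ β0 β0 = sb2)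
    (hδvar : ∀ k, cov μ (δ k) (δ k) = sd2)
    (hεcov : ∀ i j t, cov μ (ε i t) (ε j t) = se2 * Real.exp (-(d i j) / lam))
    (hβδ : ∀ k, cov μ β0 (δ k) = 0)
    (hδδ : ∀ k l, k ≠ l → cov μ (δ k) (δ l) = 0)
    (hβε : ∀ i t, cov μ β0 (ε i t) = 0)
    (hδε : ∀ k i t, cov μ (δ k) (ε i t) = 0)
    (hεε : ∀ i j t s, t ≠ s → cov μ (ε i t) (ε j s) = 0)
    (y : Fin (n + 1) → ℕ → Ω → ℝ)
    (hy : ∀ i t ω, y i t ω = β0 ω + (∑ k ∈ Finset.Icc 1 t, δ k ω) + ε i t ω) :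
    (∀ (i j : Fin (n + 1)), i ≠ j → ∀ (t : ℕ), 1 ≤ t →
      corr μ (y i t) (y j t) =
        (sb2 + (t : ℝ) * sd2 + se2 * Real.exp (-(d i j) / lam)) /
          (sb2 + (t : ℝ) * sd2 + se2)) ∧
    (∀ (i j : Fin (n + 1)), i ≠ j → ∀ (t s : ℕ), 1 ≤ t → 1 ≤ s → s ≠ t →
      corr μ (y i t) (y j s) =
        (sb2 + (min t s : ℝ) * sd2) /
          (Real.sqrt (sb2 + (t : ℝ) * sd2 + se2) *
            Real.sqrt (sb2 + (s : ℝ) * sd2 + se2))) := by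
  simp only [cov_eq_covariance, hβL2, hδL2, hεL2] at hβvar hδvar hεcov hβδ hδδ hβε hδε hεε
  have hyLevel : ∀ i t, y i t = dlmLevel β0 δ t + ε i t := fun i t => funext fun ω => by
    simp only [hy, dlmLevel, Pi.add_apply, Finset.sum_apply]
  have hyL2 : ∀ i t, MemLp (y i t) 2 μ := fun i t =>
    hyLevel i t ▸ (memLp_dlmLevel hβL2 hδL2 t).add (hεL2 i t)
  have hLevelNoise : ∀ t i s, cov[dlmLevel β0 δ t, ε i s; μ] = 0 := fun t i s =>
    covariance_dlmLevel_left_eq_zero hβL2 hδL2 (hεL2 i s) (hβε i s) (fun k => hδε k i s) t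
  have hcov : ∀ i j t s,
      cov[y i t, y j s; μ] = sb2 + (min t s : ℕ) * sd2 + cov[ε i t, ε j s; μ] := by
    intro i j t s
    rw [hyLevel, hyLevel, covariance_add_add_of_cross_eq_zero (memLp_dlmLevel hβL2 hδL2 t)
      (hεL2 i t) (memLp_dlmLevel hβL2 hδL2 s) (hεL2 j s) (hLevelNoise t j s)
      (covariance_comm _ _ ▸ hLevelNoise s i t),
      covariance_dlmLevel hβL2 hδL2 hβvar hδvar hδδ hβδ]
  have hvar : ∀ i t, cov[y i t, y i t; μ] = sb2 + (t : ℝ) * sd2 + se2 := fun i t => by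
    rw [hcov, min_self, hεcov, hddiag, neg_zero, zero_div, Real.exp_zero, mul_one]
  constructor
  · intro i j _ t _
    rw [corr_eq_covariance_div (hyL2 i t) (hyL2 j t), hvar i t, hvar j t,
      Real.mul_self_sqrt (hvar i t ▸ covariance_self_nonneg (hyL2 i t).aemeasurable), hcov,
      min_self, hεcov]
  · intro i j _ t s _ _ hst
    rw [corr_eq_covariance_div (hyL2 i t) (hyL2 j s), hvar, hvar, hcov, hεε i j t s hst.symm,
      add_zero, Nat.cast_min]

/-- In the first-order polynomial DLM, for distinct sites `i ≠ j`:
(i) the same-time correlation is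
`Cor(y_{it}, y_{jt}) = (σβ² + t·σδ² + σε²·exp(−d_{ij}/λ)) / (σβ² + t·σδ² + σε²)`; and
(ii) for distinct times `s ≠ t`, the cross-time correlation is
`Cor(y_{it}, y_{js}) = (σβ² + min{t,s}·σδ²) / (√(σβ² + t·σδ² + σε²)·√(σβ² + s·σδ² + σε²))`. -/
theorem correlation_formulas
    {Ω : Type*} [MeasurableSpace Ω] (μ : Measure Ω) [IsProbabilityMeasure μ]
    (n : ℕ) (sb2 sd2 se2 lam : ℝ)
    (hb : 0 < sb2) (hd : 0 < sd2) (he : 0 < se2) (hl : 0 < lam)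
    (β0 : Ω → ℝ) (δ : ℕ → Ω → ℝ) (ε : Fin (n + 1) → ℕ → Ω → ℝ)
    (d : Fin (n + 1) → Fin (n + 1) → ℝ)
    (hdsymm : ∀ i j, d i j = d j i) (hdnonneg : ∀ i j, 0 ≤ d i j)
    (hddiag : ∀ i, d i i = 0)
    (hβL2 : MemLp β0 2 μ) (hδL2 : ∀ k, MemLp (δ k) 2 μ)
    (hεL2 : ∀ i t, MemLp (ε i t) 2 μ)
    (hβmean : (∫ ω, β0 ω ∂μ) = 0) (hδmean : ∀ k, (∫ ω, δ k ω ∂μ) = 0)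
    (hεmean : ∀ i t, (∫ ω, ε i t ω ∂μ) = 0)
    (hβvar : cov μ β0 β0 = sb2)
    (hδvar : ∀ k, cov μ (δ k) (δ k) = sd2)
    (hεcov : ∀ i j t, cov μ (ε i t) (ε j t) = se2 * Real.exp (-(d i j) / lam))
    (hβδ : ∀ k, cov μ β0 (δ k) = 0)
    (hδδ : ∀ k l, k ≠ l → cov μ (δ k) (δ l) = 0)
    (hβε : ∀ i t, cov μ β0 (ε i t) = 0)
    (hδε : ∀ k i t, cov μ (δ k) (ε i t) = 0)
    (hεε : ∀ i j t s, t ≠ s → cov μ (ε i t) (ε j s) = 0)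
    (y : Fin (n + 1) → ℕ → Ω → ℝ)
    (hy : ∀ i t ω, y i t ω = β0 ω + (∑ k ∈ Finset.Icc 1 t, δ k ω) + ε i t ω) :
    (∀ (i j : Fin (n + 1)), i ≠ j → ∀ (t : ℕ), 1 ≤ t →
      corr μ (y i t) (y j t) =
        (sb2 + (t : ℝ) * sd2 + se2 * Real.exp (-(d i j) / lam)) /
          (sb2 + (t : ℝ) * sd2 + se2)) ∧
    (∀ (i j : Fin (n + 1)), i ≠ j → ∀ (t s : ℕ), 1 ≤ t → 1 ≤ s → s ≠ t →
      corr μ (y i t) (y j s) =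
        (sb2 + (min t s : ℝ) * sd2) /
          (Real.sqrt (sb2 + (t : ℝ) * sd2 + se2) *
            Real.sqrt (sb2 + (s : ℝ) * sd2 + se2))) :=
  correlation_formulas_general μ n sb2 sd2 se2 lam β0 δ ε d hddiag hβL2 hδL2 hεL2 hβvar hδvar hεcov
    hβδ hδδ hβε hδε hεε y hy
end

section
/- (Theorem 1, equation (17)) In the first-order polynomial DLM with n = 1 and T = 2, the predictive conditional variance of y01 given both observations satisfies Var(y01|y11, y12) = M1/Δ, where Δ = (σβ² + σδ² + σε²)(σβ² + 2σδ² + σε²) − (σβ² + σδ²)² and M1 = (σβ² + 2σδ² + σε²)·{(σβ² + σδ² + σε²)² − (σβ² + σδ² + σε²·exp(−d01/λ))²} − 2(σβ² + σδ²)²·(σε² − σε²·exp(−d01/λ)). -/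
/- Clearing the determinant `Δ` of the covariance matrix `[[v1, a], [a, v2]]` of `(y11, y12)`
turns the Schur complement into a polynomial identity; the only model-specific input is
`v1 - c1 = σε² (1 - ρ)`. -/

theorem sub_schur_quadForm_eq_div {K : Type*} [Field K] (a v1 v2 c : K)
    (hΔ : v1 * v2 - a ^ 2 ≠ 0) :
    v1 - (c ^ 2 * v2 - 2 * c * a ^ 2 + a ^ 2 * v1) / (v1 * v2 - a ^ 2) =
      (v2 * (v1 ^ 2 - c ^ 2) - 2 * a ^ 2 * (v1 - c)) / (v1 * v2 - a ^ 2) := by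
  field_simp
  ring

theorem det_cov_pos {sb2 sd2 se2 : ℝ} (hb : 0 < sb2) (hd : 0 < sd2) (he : 0 < se2) :
    0 < (sb2 + sd2 + se2) * (sb2 + 2 * sd2 + se2) - (sb2 + sd2) ^ 2 := by
  nlinarith [mul_pos hb he, mul_pos hd he, mul_pos hb hd]

theorem pred_var_y01_given_y11_y12_general (sb2 sd2 se2 lam d01 : ℝ)
    (hb : 0 < sb2) (hd : 0 < sd2) (he : 0 < se2) :
    let ρ := Real.exp (-d01 / lam)
    let a := sb2 + sd2
    let v1 := sb2 + sd2 + se2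
    let v2 := sb2 + 2 * sd2 + se2
    let c1 := sb2 + sd2 + se2 * ρ
    let c2 := sb2 + 2 * sd2 + se2 * ρ
    let Δ := v1 * v2 - a ^ 2
    let var01_1 := v1 - c1 ^ 2 / v1                                -- Var(y01 | y11)
    let var02_1 := v2 - c2 ^ 2 / v2                                -- Var(y02 | y12)
    let var01_2 := v1 - (c1 ^ 2 * v2 - 2 * c1 * a ^ 2 + a ^ 2 * v1) / Δ  -- Var(y01 | y11, y12)
    let var02_2 := v2 - (a ^ 2 * v2 - 2 * a ^ 2 * c2 + c2 ^ 2 * v1) / Δ  -- Var(y02 | y11, y12)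
    let M1 := v2 * (v1 ^ 2 - c1 ^ 2) - 2 * a ^ 2 * (se2 - se2 * ρ)
    var01_2 = M1 / Δ := by
  intro ρ a v1 v2 c1 _ _ _ _ _ _ _
  have hv1c1 : v1 - c1 = se2 - se2 * ρ := by ring
  have hschur := sub_schur_quadForm_eq_div a v1 v2 c1 (det_cov_pos hb hd he).ne'
  rwa [hv1c1] at hschur

/-- Theorem 1, eq. (17): `Var(y01|y11, y12) = M1/Δ` with
`Δ = (σβ²+σδ²+σε²)(σβ²+2σδ²+σε²) − (σβ²+σδ²)²` and
`M1 = (σβ²+2σδ²+σε²)·{(σβ²+σδ²+σε²)² − (σβ²+σδ²+σε²·exp(−d01/λ))²}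
      − 2(σβ²+σδ²)²·(σε² − σε²·exp(−d01/λ))`. -/
theorem pred_var_y01_given_y11_y12 (sb2 sd2 se2 lam d01 : ℝ)
    (hb : 0 < sb2) (hd : 0 < sd2) (he : 0 < se2) (hl : 0 < lam) (h01 : 0 ≤ d01) :
    let ρ := Real.exp (-d01 / lam)
    let a := sb2 + sd2
    let v1 := sb2 + sd2 + se2
    let v2 := sb2 + 2 * sd2 + se2
    let c1 := sb2 + sd2 + se2 * ρ
    let c2 := sb2 + 2 * sd2 + se2 * ρ
    let Δ := v1 * v2 - a ^ 2
    let var01_1 := v1 - c1 ^ 2 / v1                                -- Var(y01 | y11)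
    let var02_1 := v2 - c2 ^ 2 / v2                                -- Var(y02 | y12)
    let var01_2 := v1 - (c1 ^ 2 * v2 - 2 * c1 * a ^ 2 + a ^ 2 * v1) / Δ  -- Var(y01 | y11, y12)
    let var02_2 := v2 - (a ^ 2 * v2 - 2 * a ^ 2 * c2 + c2 ^ 2 * v1) / Δ  -- Var(y02 | y11, y12)
    let M1 := v2 * (v1 ^ 2 - c1 ^ 2) - 2 * a ^ 2 * (se2 - se2 * ρ)
    var01_2 = M1 / Δ :=
  pred_var_y01_given_y11_y12_general sb2 sd2 se2 lam d01 hb hd he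
end

section
/- (Theorem 1, equation (18)) In the first-order polynomial DLM with n = 1 and T = 2, the predictive conditional variance of y02 given both observations satisfies Var(y02|y11, y12) = M2/Δ, where Δ = (σβ² + σδ² + σε²)(σβ² + 2σδ² + σε²) − (σβ² + σδ²)² and M2 = (σβ² + σδ² + σε²)·{(σβ² + 2σδ² + σε²)² − (σβ² + 2σδ² + σε²·exp(−d01/λ))²} − 2(σβ² + σδ²)²·(σε² − σε²·exp(−d01/λ)). -/
/-! Var(y02 | y11, y12) is the Schur complement of the covariance matrix of (y11, y12) in that of
(y02, y11, y12). Over the common denominator Δ its numerator is v1(v2² − c2²) − 2a²(v2 − c2), and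
v2 − c2 = σε²(1 − ρ); the only analytic input is Δ > 0. -/

theorem schur_complement_two_eq {K : Type*} [Field K] (v1 v2 a c : K) (hΔ : v1 * v2 - a ^ 2 ≠ 0) :
    v2 - (a ^ 2 * v2 - 2 * a ^ 2 * c + c ^ 2 * v1) / (v1 * v2 - a ^ 2) =
      (v1 * (v2 ^ 2 - c ^ 2) - 2 * a ^ 2 * (v2 - c)) / (v1 * v2 - a ^ 2) := by
  rw [eq_div_iff hΔ, sub_mul, div_mul_cancel₀ _ hΔ]
  ring

theorem dlm_cov_det_pos {K : Type*} [Field K] [LinearOrder K] [IsStrictOrderedRing K]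
    {sb2 sd2 se2 : K} (hb : 0 < sb2) (hd : 0 < sd2) (he : 0 < se2) :
    0 < (sb2 + sd2 + se2) * (sb2 + 2 * sd2 + se2) - (sb2 + sd2) ^ 2 := by
  have hexpand : (sb2 + sd2 + se2) * (sb2 + 2 * sd2 + se2) - (sb2 + sd2) ^ 2 =
      se2 * (sb2 + 2 * sd2 + se2) + (sb2 + sd2) * (sd2 + se2) := by ring
  rw [hexpand]
  positivity

theorem pred_var_y02_given_y11_y12_general (sb2 sd2 se2 lam d01 : ℝ)
    (hb : 0 < sb2) (hd : 0 < sd2) (he : 0 < se2) :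
    let ρ := Real.exp (-d01 / lam)
    let a := sb2 + sd2
    let v1 := sb2 + sd2 + se2
    let v2 := sb2 + 2 * sd2 + se2
    let c1 := sb2 + sd2 + se2 * ρ
    let c2 := sb2 + 2 * sd2 + se2 * ρ
    let Δ := v1 * v2 - a ^ 2
    let var01_1 := v1 - c1 ^ 2 / v1                                -- Var(y01 | y11)
    let var02_1 := v2 - c2 ^ 2 / v2                                -- Var(y02 | y12)
    let var01_2 := v1 - (c1 ^ 2 * v2 - 2 * c1 * a ^ 2 + a ^ 2 * v1) / Δ  -- Var(y01 | y11, y12)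
    let var02_2 := v2 - (a ^ 2 * v2 - 2 * a ^ 2 * c2 + c2 ^ 2 * v1) / Δ  -- Var(y02 | y11, y12)
    let M2 := v1 * (v2 ^ 2 - c2 ^ 2) - 2 * a ^ 2 * (se2 - se2 * ρ)
    var02_2 = M2 / Δ := by
  intro ρ a v1 v2 c1 c2 Δ _ _ _ var02_2 M2
  have hc2 : v2 - c2 = se2 - se2 * ρ := by ring
  show v2 - (a ^ 2 * v2 - 2 * a ^ 2 * c2 + c2 ^ 2 * v1) / Δ = M2 / Δ
  rw [schur_complement_two_eq v1 v2 a c2 (dlm_cov_det_pos hb hd he).ne', hc2]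

/-- Theorem 1, eq. (18): `Var(y02|y11, y12) = M2/Δ` with
`Δ = (σβ²+σδ²+σε²)(σβ²+2σδ²+σε²) − (σβ²+σδ²)²` and
`M2 = (σβ²+σδ²+σε²)·{(σβ²+2σδ²+σε²)² − (σβ²+2σδ²+σε²·exp(−d01/λ))²}
      − 2(σβ²+σδ²)²·(σε² − σε²·exp(−d01/λ))`. -/
theorem pred_var_y02_given_y11_y12 (sb2 sd2 se2 lam d01 : ℝ)
    (hb : 0 < sb2) (hd : 0 < sd2) (he : 0 < se2) (hl : 0 < lam) (h01 : 0 ≤ d01) :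
    let ρ := Real.exp (-d01 / lam)
    let a := sb2 + sd2
    let v1 := sb2 + sd2 + se2
    let v2 := sb2 + 2 * sd2 + se2
    let c1 := sb2 + sd2 + se2 * ρ
    let c2 := sb2 + 2 * sd2 + se2 * ρ
    let Δ := v1 * v2 - a ^ 2
    let var01_1 := v1 - c1 ^ 2 / v1                                -- Var(y01 | y11)
    let var02_1 := v2 - c2 ^ 2 / v2                                -- Var(y02 | y12)
    let var01_2 := v1 - (c1 ^ 2 * v2 - 2 * c1 * a ^ 2 + a ^ 2 * v1) / Δ  -- Var(y01 | y11, y12)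
    let var02_2 := v2 - (a ^ 2 * v2 - 2 * a ^ 2 * c2 + c2 ^ 2 * v1) / Δ  -- Var(y02 | y11, y12)
    let M2 := v1 * (v2 ^ 2 - c2 ^ 2) - 2 * a ^ 2 * (se2 - se2 * ρ)
    var02_2 = M2 / Δ :=
  pred_var_y02_given_y11_y12_general sb2 sd2 se2 lam d01 hb hd he
end

section
/- (Theorem 2, equation (21)) In the first-order polynomial DLM with n = 1 and T = 2, conditioning on more data does not increase the predictive variance of y01, and the gap is exactly Var(y01|y11) − Var(y01|y11, y12) = σε⁴·(σβ² + σδ²)²·(1 − exp(−d01/λ))² / (Δ·(σβ² + σδ² + σε²)) ≥ 0. -/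
/-!
Conditioning on `y12` in addition to `y11` lowers the variance of `y01` by `a² (v1 - c1)² / (Δ v1)`,
a Schur-complement identity valid for any covariance entries. In the DLM, `v1 - c1 = σε² (1 - ρ)`, and
`Δ > 0`, `v1 > 0` make the gap nonnegative.
-/

theorem schur_complement_gap_eq {a v1 v2 c : ℝ} (hv1 : v1 ≠ 0) (hΔ : v1 * v2 - a ^ 2 ≠ 0) :
    (v1 - c ^ 2 / v1) - (v1 - (c ^ 2 * v2 - 2 * c * a ^ 2 + a ^ 2 * v1) / (v1 * v2 - a ^ 2)) =
      a ^ 2 * (v1 - c) ^ 2 / ((v1 * v2 - a ^ 2) * v1) := by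
  field_simp
  ring

theorem pred_var_gap_y01_general (sb2 sd2 se2 lam d01 : ℝ)
    (hb : 0 < sb2) (hd : 0 < sd2) (he : 0 < se2) :
    let ρ := Real.exp (-d01 / lam)
    let a := sb2 + sd2
    let v1 := sb2 + sd2 + se2
    let v2 := sb2 + 2 * sd2 + se2
    let c1 := sb2 + sd2 + se2 * ρ
    let c2 := sb2 + 2 * sd2 + se2 * ρ
    let Δ := v1 * v2 - a ^ 2
    let var01_1 := v1 - c1 ^ 2 / v1                                -- Var(y01 | y11)
    let var02_1 := v2 - c2 ^ 2 / v2                                -- Var(y02 | y12)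
    let var01_2 := v1 - (c1 ^ 2 * v2 - 2 * c1 * a ^ 2 + a ^ 2 * v1) / Δ  -- Var(y01 | y11, y12)
    let var02_2 := v2 - (a ^ 2 * v2 - 2 * a ^ 2 * c2 + c2 ^ 2 * v1) / Δ  -- Var(y02 | y11, y12)
    var01_1 - var01_2 = se2 ^ 2 * a ^ 2 * (1 - ρ) ^ 2 / (Δ * v1) ∧
      0 ≤ se2 ^ 2 * a ^ 2 * (1 - ρ) ^ 2 / (Δ * v1) := by
  intro ρ a v1 v2 c1 c2 Δ var01_1 _ var01_2 _
  have hv1 : 0 < v1 := by positivity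
  have hΔ : 0 < Δ := by
    have hΔ_eq : Δ = sd2 * a + se2 * (a + v2) := by ring
    rw [hΔ_eq]
    positivity
  have hc1 : v1 - c1 = se2 * (1 - ρ) := by ring
  have hgap : var01_1 - var01_2 = a ^ 2 * (v1 - c1) ^ 2 / (Δ * v1) :=
    schur_complement_gap_eq hv1.ne' hΔ.ne'
  rw [hgap, hc1]
  exact ⟨by ring, by positivity⟩

/-- Theorem 2, eq. (21):
`Var(y01|y11) − Var(y01|y11,y12) = σε⁴·(σβ²+σδ²)²·(1−exp(−d01/λ))² / (Δ·(σβ²+σδ²+σε²)) ≥ 0`. -/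
theorem pred_var_gap_y01 (sb2 sd2 se2 lam d01 : ℝ)
    (hb : 0 < sb2) (hd : 0 < sd2) (he : 0 < se2) (hl : 0 < lam) (h01 : 0 ≤ d01) :
    let ρ := Real.exp (-d01 / lam)
    let a := sb2 + sd2
    let v1 := sb2 + sd2 + se2
    let v2 := sb2 + 2 * sd2 + se2
    let c1 := sb2 + sd2 + se2 * ρ
    let c2 := sb2 + 2 * sd2 + se2 * ρ
    let Δ := v1 * v2 - a ^ 2
    let var01_1 := v1 - c1 ^ 2 / v1                                -- Var(y01 | y11)
    let var02_1 := v2 - c2 ^ 2 / v2                                -- Var(y02 | y12)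
    let var01_2 := v1 - (c1 ^ 2 * v2 - 2 * c1 * a ^ 2 + a ^ 2 * v1) / Δ  -- Var(y01 | y11, y12)
    let var02_2 := v2 - (a ^ 2 * v2 - 2 * a ^ 2 * c2 + c2 ^ 2 * v1) / Δ  -- Var(y02 | y11, y12)
    var01_1 - var01_2 = se2 ^ 2 * a ^ 2 * (1 - ρ) ^ 2 / (Δ * v1) ∧
      0 ≤ se2 ^ 2 * a ^ 2 * (1 - ρ) ^ 2 / (Δ * v1) :=
  pred_var_gap_y01_general sb2 sd2 se2 lam d01 hb hd he
end

section
/- (Theorem 2, equation (23)) In the first-order polynomial DLM with n = 1 and T = 2, conditional on all the data the predictive variance increases with the time of the predictand: Var(y02|y11, y12) − Var(y01|y11, y12) = σε⁴·σδ²·(1 − exp(−d01/λ))² / Δ ≥ 0. -/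
/-!
Both conditional variances are Schur complements of the covariance matrix of `(y11, y12)`,
so they share the denominator `Δ`, the determinant of that matrix. Over `Δ`, the numerator of
their difference is a polynomial in the variance components that collapses to
`σε⁴ σδ² (1 - ρ)²`; and `Δ > 0` since `Δ = a (σδ² + 2σε²) + σε² (σδ² + σε²)`.
-/

lemma dlm_det_pos {sb2 sd2 se2 : ℝ} (hb : 0 ≤ sb2) (hd : 0 ≤ sd2) (he : 0 < se2) :
    0 < (sb2 + sd2 + se2) * (sb2 + 2 * sd2 + se2) - (sb2 + sd2) ^ 2 := by
  have hΔ : (sb2 + sd2 + se2) * (sb2 + 2 * sd2 + se2) - (sb2 + sd2) ^ 2 =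
      (sb2 + sd2) * (sd2 + 2 * se2) + se2 * (sd2 + se2) := by ring
  rw [hΔ]
  positivity

lemma sub_div_sub_sub_div_eq_div {K : Type*} [Field K] {Δ x y A B N : K} (hΔ : Δ ≠ 0)
    (h : Δ * (x - y) - A + B = N) : (x - A / Δ) - (y - B / Δ) = N / Δ := by
  rw [eq_div_iff hΔ, ← h]
  field_simp
  ring

theorem pred_var_increase_full_data_general (sb2 sd2 se2 lam d01 : ℝ)
    (hb : 0 < sb2) (hd : 0 < sd2) (he : 0 < se2) :
    let ρ := Real.exp (-d01 / lam)
    let a := sb2 + sd2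
    let v1 := sb2 + sd2 + se2
    let v2 := sb2 + 2 * sd2 + se2
    let c1 := sb2 + sd2 + se2 * ρ
    let c2 := sb2 + 2 * sd2 + se2 * ρ
    let Δ := v1 * v2 - a ^ 2
    let var01_1 := v1 - c1 ^ 2 / v1                                -- Var(y01 | y11)
    let var02_1 := v2 - c2 ^ 2 / v2                                -- Var(y02 | y12)
    let var01_2 := v1 - (c1 ^ 2 * v2 - 2 * c1 * a ^ 2 + a ^ 2 * v1) / Δ  -- Var(y01 | y11, y12)
    let var02_2 := v2 - (a ^ 2 * v2 - 2 * a ^ 2 * c2 + c2 ^ 2 * v1) / Δ  -- Var(y02 | y11, y12)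
    var02_2 - var01_2 = se2 ^ 2 * sd2 * (1 - ρ) ^ 2 / Δ ∧
      0 ≤ se2 ^ 2 * sd2 * (1 - ρ) ^ 2 / Δ := by
  intro ρ a v1 v2 c1 c2 Δ _ _ _ _
  have hΔ : 0 < Δ := dlm_det_pos hb.le hd.le he
  refine ⟨sub_div_sub_sub_div_eq_div hΔ.ne' ?_, by positivity⟩
  simp only [Δ, v1, v2, c1, c2, a]
  ring

/-- Theorem 2, eq. (23): conditional on all the data, the predictive variance
increases with the time of the predictand:
`Var(y02|y11,y12) − Var(y01|y11,y12) = σε⁴·σδ²·(1−exp(−d01/λ))²/Δ ≥ 0`. -/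
theorem pred_var_increase_full_data (sb2 sd2 se2 lam d01 : ℝ)
    (hb : 0 < sb2) (hd : 0 < sd2) (he : 0 < se2) (hl : 0 < lam) (h01 : 0 ≤ d01) :
    let ρ := Real.exp (-d01 / lam)
    let a := sb2 + sd2
    let v1 := sb2 + sd2 + se2
    let v2 := sb2 + 2 * sd2 + se2
    let c1 := sb2 + sd2 + se2 * ρ
    let c2 := sb2 + 2 * sd2 + se2 * ρ
    let Δ := v1 * v2 - a ^ 2
    let var01_1 := v1 - c1 ^ 2 / v1                                -- Var(y01 | y11)
    let var02_1 := v2 - c2 ^ 2 / v2                                -- Var(y02 | y12)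
    let var01_2 := v1 - (c1 ^ 2 * v2 - 2 * c1 * a ^ 2 + a ^ 2 * v1) / Δ  -- Var(y01 | y11, y12)
    let var02_2 := v2 - (a ^ 2 * v2 - 2 * a ^ 2 * c2 + c2 ^ 2 * v1) / Δ  -- Var(y02 | y11, y12)
    var02_2 - var01_2 = se2 ^ 2 * sd2 * (1 - ρ) ^ 2 / Δ ∧
      0 ≤ se2 ^ 2 * sd2 * (1 - ρ) ^ 2 / Δ :=
  pred_var_increase_full_data_general sb2 sd2 se2 lam d01 hb hd he
end

section
/- (Theorem 2, equation (24)) In the first-order polynomial DLM with n = 1 and T = 2, the one-observation predictive variance increases with the time of the predictand: Var(y02|y12) − Var(y01|y11) = σε⁴·σδ²·(1 − exp(−d01/λ))² / ((σβ² + σδ² + σε²)·(σβ² + 2σδ² + σε²)) ≥ 0. -/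
/-! With `g := v - c`, the one-observation conditional variance is
`v - c² / v = 2 g - g² / v`. Both times have the same gap `g = σε² (1 - ρ)`, while the marginal
variance grows from `v₁` to `v₂ = v₁ + σδ²`, so the difference is `g² (1 / v₁ - 1 / v₂)`. -/

theorem sub_sq_div_self_eq {K : Type*} [Field K] {v : K} (hv : v ≠ 0) (c : K) :
    v - c ^ 2 / v = 2 * (v - c) - (v - c) ^ 2 / v := by
  field_simp
  ring

theorem sub_sq_div_self_sub_sub_sq_div_self {K : Type*} [Field K] {v₁ v₂ c₁ c₂ : K}
    (h₁ : v₁ ≠ 0) (h₂ : v₂ ≠ 0) (hgap : v₁ - c₁ = v₂ - c₂) :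
    v₂ - c₂ ^ 2 / v₂ - (v₁ - c₁ ^ 2 / v₁) = (v₁ - c₁) ^ 2 * (v₂ - v₁) / (v₁ * v₂) := by
  rw [sub_sq_div_self_eq h₁, sub_sq_div_self_eq h₂, ← hgap]
  field_simp
  ring

theorem pred_var_increase_one_obs_general (sb2 sd2 se2 lam d01 : ℝ)
    (hb : 0 < sb2) (hd : 0 < sd2) (he : 0 < se2) :
    let ρ := Real.exp (-d01 / lam)
    let a := sb2 + sd2
    let v1 := sb2 + sd2 + se2
    let v2 := sb2 + 2 * sd2 + se2
    let c1 := sb2 + sd2 + se2 * ρ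
    let c2 := sb2 + 2 * sd2 + se2 * ρ
    let Δ := v1 * v2 - a ^ 2
    let var01_1 := v1 - c1 ^ 2 / v1                                -- Var(y01 | y11)
    let var02_1 := v2 - c2 ^ 2 / v2                                -- Var(y02 | y12)
    let var01_2 := v1 - (c1 ^ 2 * v2 - 2 * c1 * a ^ 2 + a ^ 2 * v1) / Δ  -- Var(y01 | y11, y12)
    let var02_2 := v2 - (a ^ 2 * v2 - 2 * a ^ 2 * c2 + c2 ^ 2 * v1) / Δ  -- Var(y02 | y11, y12)
    var02_1 - var01_1 = se2 ^ 2 * sd2 * (1 - ρ) ^ 2 / (v1 * v2) ∧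
      0 ≤ se2 ^ 2 * sd2 * (1 - ρ) ^ 2 / (v1 * v2) := by
  intro ρ a v1 v2 c1 c2 Δ var01_1 var02_1 var01_2 var02_2
  have hv1 : v1 ≠ 0 := by positivity
  have hv2 : v2 ≠ 0 := by positivity
  refine ⟨?_, by positivity⟩
  calc var02_1 - var01_1 = (v1 - c1) ^ 2 * (v2 - v1) / (v1 * v2) :=
        sub_sq_div_self_sub_sub_sq_div_self hv1 hv2 (by ring)
    _ = se2 ^ 2 * sd2 * (1 - ρ) ^ 2 / (v1 * v2) := by ring

/-- Theorem 2, eq. (24): the one-observation predictive variance increases with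
the time of the predictand:
`Var(y02|y12) − Var(y01|y11) = σε⁴·σδ²·(1−exp(−d01/λ))²/((σβ²+σδ²+σε²)(σβ²+2σδ²+σε²)) ≥ 0`. -/
theorem pred_var_increase_one_obs (sb2 sd2 se2 lam d01 : ℝ)
    (hb : 0 < sb2) (hd : 0 < sd2) (he : 0 < se2) (hl : 0 < lam) (h01 : 0 ≤ d01) :
    let ρ := Real.exp (-d01 / lam)
    let a := sb2 + sd2
    let v1 := sb2 + sd2 + se2
    let v2 := sb2 + 2 * sd2 + se2
    let c1 := sb2 + sd2 + se2 * ρ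
    let c2 := sb2 + 2 * sd2 + se2 * ρ
    let Δ := v1 * v2 - a ^ 2
    let var01_1 := v1 - c1 ^ 2 / v1                                -- Var(y01 | y11)
    let var02_1 := v2 - c2 ^ 2 / v2                                -- Var(y02 | y12)
    let var01_2 := v1 - (c1 ^ 2 * v2 - 2 * c1 * a ^ 2 + a ^ 2 * v1) / Δ  -- Var(y01 | y11, y12)
    let var02_2 := v2 - (a ^ 2 * v2 - 2 * a ^ 2 * c2 + c2 ^ 2 * v1) / Δ  -- Var(y02 | y11, y12)
    var02_1 - var01_1 = se2 ^ 2 * sd2 * (1 - ρ) ^ 2 / (v1 * v2) ∧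
      0 ≤ se2 ^ 2 * sd2 * (1 - ρ) ^ 2 / (v1 * v2) :=
  pred_var_increase_one_obs_general sb2 sd2 se2 lam d01 hb hd he
end

section
/- (Theorem 2, inequality (25)) In the first-order polynomial DLM with n = 1 and T = 2, the reduction in predictive variance from the extra observation is at least as large for the earlier predictand: Var(y01|y11) − Var(y01|y11, y12) ≥ Var(y02|y12) − Var(y02|y11, y12). -/
/-!
Adding a second conditioning variable `x₂` to `x₁` reduces the conditional variance of a
predictand `y` by `(q v - p b)² / (v Δ)`, where `v = Var x₁`, `p = Cov(y, x₁)`,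
`q = Cov(y, x₂)`, `b = Cov(x₁, x₂)` and `Δ` is the determinant of the covariance of `(x₁, x₂)`.
For `y01` and `y02` the numerators are `(a (v1 - c1))²` and `(a (v2 - c2))²`, which agree since
`v1 - c1 = v2 - c2 = σε² (1 - ρ)`; the denominators are `v1 Δ ≤ v2 Δ`.
-/

theorem quadForm_div_sub_sq_div_eq (p q v w b : ℝ) (hv : v ≠ 0) (hΔ : v * w - b ^ 2 ≠ 0) :
    (p ^ 2 * w - 2 * p * q * b + q ^ 2 * v) / (v * w - b ^ 2) - p ^ 2 / v
      = (q * v - p * b) ^ 2 / (v * (v * w - b ^ 2)) := by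
  rw [div_sub_div _ _ hΔ hv, div_eq_div_iff (mul_ne_zero hΔ hv) (mul_ne_zero hv hΔ)]
  ring

theorem pred_var_reduction_comparison_general (sb2 sd2 se2 lam d01 : ℝ)
    (hb : 0 < sb2) (hd : 0 < sd2) (he : 0 < se2) :
    let ρ := Real.exp (-d01 / lam)
    let a := sb2 + sd2
    let v1 := sb2 + sd2 + se2
    let v2 := sb2 + 2 * sd2 + se2
    let c1 := sb2 + sd2 + se2 * ρ
    let c2 := sb2 + 2 * sd2 + se2 * ρ
    let Δ := v1 * v2 - a ^ 2
    let var01_1 := v1 - c1 ^ 2 / v1                                -- Var(y01 | y11)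
    let var02_1 := v2 - c2 ^ 2 / v2                                -- Var(y02 | y12)
    let var01_2 := v1 - (c1 ^ 2 * v2 - 2 * c1 * a ^ 2 + a ^ 2 * v1) / Δ  -- Var(y01 | y11, y12)
    let var02_2 := v2 - (a ^ 2 * v2 - 2 * a ^ 2 * c2 + c2 ^ 2 * v1) / Δ  -- Var(y02 | y11, y12)
    var01_1 - var01_2 ≥ var02_1 - var02_2 := by
  intro ρ a v1 v2 c1 c2 Δ var01_1 var02_1 var01_2 var02_2
  have hv1 : 0 < v1 := by positivity
  have hv2 : 0 < v2 := by positivity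
  have hv12 : v1 ≤ v2 := by simp only [v1, v2]; linarith
  have hΔ : 0 < Δ := by
    simp only [Δ, v1, v2, a]; nlinarith [mul_pos hb hd, mul_pos hd he, mul_pos he he]
  have reduction01 : var01_1 - var01_2 = (a * v1 - c1 * a) ^ 2 / (v1 * Δ) := by
    rw [← quadForm_div_sub_sq_div_eq c1 a v1 v2 a hv1.ne' hΔ.ne']
    ring
  have reduction02 : var02_1 - var02_2 = (a * v2 - c2 * a) ^ 2 / (v2 * Δ) := by
    have h := quadForm_div_sub_sq_div_eq c2 a v2 v1 a hv2.ne' (by rw [mul_comm]; exact hΔ.ne')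
    rw [mul_comm v2 v1] at h
    rw [← h]
    ring
  have same_numerator : a * v1 - c1 * a = a * v2 - c2 * a := by simp only [v1, v2, c1, c2]; ring
  rw [reduction01, reduction02, same_numerator]
  exact div_le_div_of_nonneg_left (sq_nonneg _) (by positivity)
    (mul_le_mul_of_nonneg_right hv12 hΔ.le)

/-- Theorem 2, ineq. (25): the reduction in predictive variance from the extra
observation is at least as large for the earlier predictand:
`Var(y01|y11) − Var(y01|y11,y12) ≥ Var(y02|y12) − Var(y02|y11,y12)`. -/
theorem pred_var_reduction_comparison (sb2 sd2 se2 lam d01 : ℝ)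
    (hb : 0 < sb2) (hd : 0 < sd2) (he : 0 < se2) (hl : 0 < lam) (h01 : 0 ≤ d01) :
    let ρ := Real.exp (-d01 / lam)
    let a := sb2 + sd2
    let v1 := sb2 + sd2 + se2
    let v2 := sb2 + 2 * sd2 + se2
    let c1 := sb2 + sd2 + se2 * ρ
    let c2 := sb2 + 2 * sd2 + se2 * ρ
    let Δ := v1 * v2 - a ^ 2
    let var01_1 := v1 - c1 ^ 2 / v1                                -- Var(y01 | y11)
    let var02_1 := v2 - c2 ^ 2 / v2                                -- Var(y02 | y12)
    let var01_2 := v1 - (c1 ^ 2 * v2 - 2 * c1 * a ^ 2 + a ^ 2 * v1) / Δ  -- Var(y01 | y11, y12)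
    let var02_2 := v2 - (a ^ 2 * v2 - 2 * a ^ 2 * c2 + c2 ^ 2 * v1) / Δ  -- Var(y02 | y11, y12)
    var01_1 - var01_2 ≥ var02_1 - var02_2 :=
  pred_var_reduction_comparison_general sb2 sd2 se2 lam d01 hb hd he
end

section
/- (Theorem 2, inequality (26)) In the first-order polynomial DLM with n = 1 and T = 2, the across-time gap in predictive variances is at least as large when conditioning on all the data: Var(y02|y12) − Var(y01|y11) ≤ Var(y02|y11, y12) − Var(y01|y11, y12). -/
/-!
Writing `s = v₂ - v₁ = c₂ - c₁` for the common increment of variance and covariance from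
time 1 to time 2, the difference between the two gaps is the explicit quantity
`a² s (v₁ - c₁)² / (v₁ v₂ Δ)`, which is nonnegative because `v₁, v₂, Δ > 0`.
-/

section ConditionalVarianceGap

variable {a v₁ v₂ c₁ c₂ s : ℝ}

theorem condVar_gap_sub_eq (hv₁ : v₁ ≠ 0) (hv₂ : v₂ ≠ 0) (hΔ : v₁ * v₂ - a ^ 2 ≠ 0)
    (hv : v₂ = v₁ + s) (hc : c₂ = c₁ + s) :
    (v₂ - (a ^ 2 * v₂ - 2 * a ^ 2 * c₂ + c₂ ^ 2 * v₁) / (v₁ * v₂ - a ^ 2)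
        - (v₁ - (c₁ ^ 2 * v₂ - 2 * c₁ * a ^ 2 + a ^ 2 * v₁) / (v₁ * v₂ - a ^ 2)))
      - (v₂ - c₂ ^ 2 / v₂ - (v₁ - c₁ ^ 2 / v₁))
      = a ^ 2 * s * (v₁ - c₁) ^ 2 / (v₁ * v₂ * (v₁ * v₂ - a ^ 2)) := by
  subst hv hc
  field_simp
  ring

theorem condVar_gap_le (hv₁ : 0 < v₁) (hs : 0 ≤ s) (hΔ : 0 < v₁ * v₂ - a ^ 2)
    (hv : v₂ = v₁ + s) (hc : c₂ = c₁ + s) :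
    v₂ - c₂ ^ 2 / v₂ - (v₁ - c₁ ^ 2 / v₁)
      ≤ v₂ - (a ^ 2 * v₂ - 2 * a ^ 2 * c₂ + c₂ ^ 2 * v₁) / (v₁ * v₂ - a ^ 2)
        - (v₁ - (c₁ ^ 2 * v₂ - 2 * c₁ * a ^ 2 + a ^ 2 * v₁) / (v₁ * v₂ - a ^ 2)) := by
  have hv₂ : 0 < v₂ := by linarith
  rw [← sub_nonneg, condVar_gap_sub_eq hv₁.ne' hv₂.ne' hΔ.ne' hv hc]
  exact div_nonneg (mul_nonneg (mul_nonneg (sq_nonneg a) hs) (sq_nonneg _))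
    (mul_pos (mul_pos hv₁ hv₂) hΔ).le

end ConditionalVarianceGap

theorem pred_var_gap_comparison_general (sb2 sd2 se2 lam d01 : ℝ)
    (hb : 0 < sb2) (hd : 0 < sd2) (he : 0 < se2) :
    let ρ := Real.exp (-d01 / lam)
    let a := sb2 + sd2
    let v1 := sb2 + sd2 + se2
    let v2 := sb2 + 2 * sd2 + se2
    let c1 := sb2 + sd2 + se2 * ρ
    let c2 := sb2 + 2 * sd2 + se2 * ρ
    let Δ := v1 * v2 - a ^ 2
    let var01_1 := v1 - c1 ^ 2 / v1                                -- Var(y01 | y11)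
    let var02_1 := v2 - c2 ^ 2 / v2                                -- Var(y02 | y12)
    let var01_2 := v1 - (c1 ^ 2 * v2 - 2 * c1 * a ^ 2 + a ^ 2 * v1) / Δ  -- Var(y01 | y11, y12)
    let var02_2 := v2 - (a ^ 2 * v2 - 2 * a ^ 2 * c2 + c2 ^ 2 * v1) / Δ  -- Var(y02 | y11, y12)
    var02_1 - var01_1 ≤ var02_2 - var01_2 := by
  simp only
  exact condVar_gap_le (s := sd2) (by positivity) hd.le (by nlinarith [mul_pos hb he])
    (by ring) (by ring)

/-- Theorem 2, ineq. (26): the across-time gap in predictive variances is at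
least as large when conditioning on all the data:
`Var(y02|y12) − Var(y01|y11) ≤ Var(y02|y11,y12) − Var(y01|y11,y12)`. -/
theorem pred_var_gap_comparison (sb2 sd2 se2 lam d01 : ℝ)
    (hb : 0 < sb2) (hd : 0 < sd2) (he : 0 < se2) (hl : 0 < lam) (h01 : 0 ≤ d01) :
    let ρ := Real.exp (-d01 / lam)
    let a := sb2 + sd2
    let v1 := sb2 + sd2 + se2
    let v2 := sb2 + 2 * sd2 + se2
    let c1 := sb2 + sd2 + se2 * ρ
    let c2 := sb2 + 2 * sd2 + se2 * ρ
    let Δ := v1 * v2 - a ^ 2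
    let var01_1 := v1 - c1 ^ 2 / v1                                -- Var(y01 | y11)
    let var02_1 := v2 - c2 ^ 2 / v2                                -- Var(y02 | y12)
    let var01_2 := v1 - (c1 ^ 2 * v2 - 2 * c1 * a ^ 2 + a ^ 2 * v1) / Δ  -- Var(y01 | y11, y12)
    let var02_2 := v2 - (a ^ 2 * v2 - 2 * a ^ 2 * c2 + c2 ^ 2 * v1) / Δ  -- Var(y02 | y11, y12)
    var02_1 - var01_1 ≤ var02_2 - var01_2 :=
  pred_var_gap_comparison_general sb2 sd2 se2 lam d01 hb hd he
end

section
/- (Corollary 2) In the first-order polynomial DLM with n = 1 and T = 2 and with d01 > 0, let Var*(y02|y12) denote the predictive variance obtained by applying the DLM to the data at time T = 2 only, which equals Var(y01|y11) = (v1² − c1²)/v1, and let Var(y02|y11, y12) = M2/Δ be the predictive variance based on all the data as in Theorem 1. Then Var*(y02|y12) < Var(y02|y11, y12) if and only if σε² > σβ²·(1 + σβ²/σδ²). -/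
/-!
Clearing denominators, the gap between the two predictive variances factors as
`M2 · v1 − (v1² − c1²) · Δ = σε⁴ (1 − ρ)² (σδ² σε² − σβ² σδ² − σβ⁴)`.
Since `ρ < 1` the prefactor is positive, so the sign of the gap is that of the last factor,
which after dividing by `σδ²` is the stated threshold on `σε²`.
-/

theorem div_lt_div_iff_pos_of_cross_eq {p q p' q' k s : ℝ} (hp : 0 < p) (hq : 0 < q)
    (hk : 0 < k) (hcross : q' * p - p' * q = k * s) :
    p' / p < q' / q ↔ 0 < s := by
  rw [div_lt_div_iff₀ hp hq, ← sub_pos, hcross]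
  exact mul_pos_iff_of_pos_left hk

theorem mul_one_add_div_lt_iff {b d e : ℝ} (hd : 0 < d) :
    b * (1 + b / d) < e ↔ 0 < d * e - b * d - b ^ 2 := by
  have h : e - b * (1 + b / d) = (d * e - b * d - b ^ 2) / d := by
    field_simp
    ring
  rw [← sub_pos, h, div_pos_iff_of_pos_right hd]

theorem pred_var_cross_eq (sb2 sd2 se2 ρ : ℝ) :
    let a := sb2 + sd2
    let v1 := sb2 + sd2 + se2
    let v2 := sb2 + 2 * sd2 + se2
    let c1 := sb2 + sd2 + se2 * ρ
    let c2 := sb2 + 2 * sd2 + se2 * ρ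
    (v1 * (v2 ^ 2 - c2 ^ 2) - 2 * a ^ 2 * se2 * (1 - ρ)) * v1 - (v1 ^ 2 - c1 ^ 2) * (v1 * v2 - a ^ 2)
      = se2 ^ 2 * (1 - ρ) ^ 2 * (sd2 * se2 - sb2 * sd2 - sb2 ^ 2) := by
  intros
  ring

/-- Corollary 2: in the first-order polynomial DLM with n = 1, T = 2 and
`d01 > 0`, let `Var*(y02|y12) = Var(y01|y11) = (v1² − c1²)/v1` be the predictive variance from
applying the DLM to the time-2 data only, and let `Var(y02|y11, y12) = M2/Δ` be the predictive
variance based on all the data. Then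
`Var*(y02|y12) < Var(y02|y11, y12) ↔ σε² > σβ²·(1 + σβ²/σδ²)`. -/
theorem pred_var_paradox (sb2 sd2 se2 lam d01 : ℝ)
    (hb : 0 < sb2) (hd : 0 < sd2) (he : 0 < se2) (hl : 0 < lam) (h01 : 0 < d01) :
    let ρ := Real.exp (-d01 / lam)
    let a := sb2 + sd2
    let v1 := sb2 + sd2 + se2
    let v2 := sb2 + 2 * sd2 + se2
    let c1 := sb2 + sd2 + se2 * ρ
    let c2 := sb2 + 2 * sd2 + se2 * ρ
    let Δ := v1 * v2 - a ^ 2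
    let M2 := v1 * (v2 ^ 2 - c2 ^ 2) - 2 * a ^ 2 * se2 * (1 - ρ)
    ((v1 ^ 2 - c1 ^ 2) / v1 < M2 / Δ ↔ se2 > sb2 * (1 + sb2 / sd2)) := by
  intro ρ a v1 v2 c1 c2 Δ M2
  have hρ : ρ < 1 := Real.exp_lt_one_iff.mpr (div_neg_of_neg_of_pos (neg_neg_of_pos h01) hl)
  have hv1 : 0 < v1 := by positivity
  have hΔ : 0 < Δ := by
    have : Δ = a * (sd2 + 2 * se2) + se2 * (sd2 + se2) := by ring
    rw [this]
    positivity
  have hk : 0 < se2 ^ 2 * (1 - ρ) ^ 2 := by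
    have : 0 < 1 - ρ := sub_pos.mpr hρ
    positivity
  rw [gt_iff_lt, mul_one_add_div_lt_iff hd]
  exact div_lt_div_iff_pos_of_cross_eq hv1 hΔ hk (pred_var_cross_eq sb2 sd2 se2 ρ)
end
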